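/- (Decomposition of the nominal error impulse response.) With g_{ed}(t) = exp((A−KC)t)(N₁ − KN₂), g_{ẽd}(t) = exp(At) N₁, g_{er}(t) = −exp(At) K for t ≥ 0, and g_{rd}(t) = C g_{ed}(t) + N₂ δ(t), the identity g_{ed} = g_{ẽd} + g_{er} ∗ g_{rd} holds, where ∗ denotes convolution of impulse responses (with the Dirac delta acting as convolution identity). -/

import Mathlib

open MeasureTheory


/-- Vector q-norm on `Fin n → ℝ`. -/
noncomputable def qnorm {n : ℕ} (q : ℝ) (x : Fin n → ℝ) : ℝ :=
  (∑ i, |x i| ^ q) ^ (1 / q)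

/-- L∞,q signal norm: the supremum over time of the vector q-norm. -/
noncomputable def sigNorm {n : ℕ} (q : ℝ) (u : ℝ → Fin n → ℝ) : ℝ :=
  ⨆ t : ℝ, qnorm q (u t)

/-- Matrix exponential `exp(M)`. -/
noncomputable def mexp {n : ℕ} (M : Matrix (Fin n) (Fin n) ℝ) : Matrix (Fin n) (Fin n) ℝ :=
  NormedSpace.exp M

section Aux

open NormedSpace

attribute [local instance] Matrix.linftyOpNormedAddCommGroup Matrix.linftyOpNormedRing
  Matrix.linftyOpNormedAlgebra Matrix.linftyOpNormedSpace

/-- decomposition of the nominal error impulse response,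
`g_ed = g_ẽd + g_er ∗ g_rd` with the Dirac delta feedthrough term written out:
`exp((A−KC)t)(N₁−KN₂) = exp(At)N₁ − ∫₀^t exp(As) K C exp((A−KC)(t−s))(N₁−KN₂) ds − exp(At)KN₂`. -/
theorem error_impulse_response_decomposition {n p m : ℕ}
    (A : Matrix (Fin n) (Fin n) ℝ) (C : Matrix (Fin p) (Fin n) ℝ)
    (K : Matrix (Fin n) (Fin p) ℝ) (N1 : Matrix (Fin n) (Fin m) ℝ)
    (N2 : Matrix (Fin p) (Fin m) ℝ) (t : ℝ) (ht : 0 ≤ t) :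
    mexp (t • (A - K * C)) * (N1 - K * N2) =
      mexp (t • A) * N1
      - (Matrix.of fun i j => ∫ s in (0:ℝ)..t,
          ((mexp (s • A) * K) * (C * (mexp ((t - s) • (A - K * C)) * (N1 - K * N2)))) i j)
      - mexp (t • A) * (K * N2) := by
  set B := A - K * C with hB
  set M := N1 - K * N2 with hM
  have hKC : K * C = A - B := by rw [hB]; abel
  -- right multiplication by M as a continuous linear map
  let R : Matrix (Fin n) (Fin n) ℝ →L[ℝ] Matrix (Fin n) (Fin m) ℝ :=
    LinearMap.toContinuousLinearMap
      { toFun := fun X => X * M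
        map_add' := fun X Y => Matrix.add_mul X Y M
        map_smul' := fun c X => Matrix.smul_mul c X M }
  have hR : ∀ X, R X = X * M := fun X => rfl
  -- the matrix-valued derivative identity
  have key : ∀ s : ℝ, HasDerivAt
      (fun s : ℝ => exp (s • A) * exp ((t - s) • B) * M)
      (exp (s • A) * (K * C) * exp ((t - s) • B) * M) s := by
    intro s
    have h1 : HasDerivAt (fun s : ℝ => exp (s • A)) (exp (s • A) * A) s :=
      hasDerivAt_exp_smul_const A s
    have hin : HasDerivAt (fun s : ℝ => t - s) (-1 : ℝ) s := by
      simpa using (hasDerivAt_id s).const_sub t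
    have h2 : HasDerivAt (fun s : ℝ => exp ((t - s) • B))
        ((-1 : ℝ) • (B * exp ((t - s) • B))) s :=
      (hasDerivAt_exp_smul_const' B (t - s)).scomp s hin
    have h3 := R.hasFDerivAt.comp_hasDerivAt s (h1.mul h2)
    have heq : R (exp (s • A) * A * exp ((t - s) • B)
        + exp (s • A) * ((-1 : ℝ) • (B * exp ((t - s) • B))))
        = exp (s • A) * (K * C) * exp ((t - s) • B) * M := by
      rw [hR, hKC, neg_one_smul]
      simp only [sub_mul, mul_sub, mul_assoc, mul_neg]
      abel
    exact h3.congr_deriv heq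
  -- continuity of the derivative
  have hexpc : Continuous fun s : ℝ => exp (s • A) :=
    exp_continuous.comp (continuous_id.smul continuous_const)
  have hexpc' : Continuous fun s : ℝ => exp ((t - s) • B) :=
    exp_continuous.comp ((continuous_const.sub continuous_id).smul continuous_const)
  have hcont : Continuous fun s : ℝ =>
      exp (s • A) * (K * C) * exp ((t - s) • B) * M := by
    have : Continuous fun s : ℝ => R (exp (s • A) * (K * C) * exp ((t - s) • B)) :=
      R.continuous.comp ((hexpc.mul continuous_const).mul hexpc')
    exact this
  have hInt :=
    hcont.intervalIntegrable (μ := volume) 0 t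
  have hftc := intervalIntegral.integral_eq_sub_of_hasDerivAt
      (f := fun s : ℝ => exp (s • A) * exp ((t - s) • B) * M)
      (fun s _ => key s) hInt
  simp only [sub_self, zero_smul, exp_zero, mul_one, one_mul, sub_zero] at hftc
  -- entrywise equality of the integral matrix
  have hentry : (Matrix.of fun i j => ∫ s in (0:ℝ)..t,
      ((mexp (s • A) * K) * (C * (mexp ((t - s) • B) * M))) i j) =
      ∫ s in (0:ℝ)..t, exp (s • A) * (K * C) * exp ((t - s) • B) * M := by
    ext i j
    have L : Matrix (Fin n) (Fin m) ℝ →L[ℝ] ℝ :=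
      LinearMap.toContinuousLinearMap (Matrix.entryLinearMap ℝ ℝ i j)
    have hcomm := (LinearMap.toContinuousLinearMap
        (Matrix.entryLinearMap ℝ ℝ i j)).intervalIntegral_comp_comm hInt
    simp only [Matrix.of_apply]
    rw [show ((∫ s in (0:ℝ)..t,
        exp (s • A) * (K * C) * exp ((t - s) • B) * M) i j) =
        LinearMap.toContinuousLinearMap (Matrix.entryLinearMap ℝ ℝ i j)
          (∫ s in (0:ℝ)..t, exp (s • A) * (K * C) * exp ((t - s) • B) * M) from rfl]
    refine Eq.trans ?_ hcomm
    congr 1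
    ext s
    show ((mexp (s • A) * K) * (C * (mexp ((t - s) • B) * M))) i j
      = (exp (s • A) * (K * C) * exp ((t - s) • B) * M) i j
    rw [show (mexp (s • A) * K) * (C * (mexp ((t - s) • B) * M))
      = exp (s • A) * (K * C) * exp ((t - s) • B) * M by
        simp only [mexp, Matrix.mul_assoc]]
  have hmain : mexp (t • B) * M = mexp (t • A) * M - (Matrix.of fun i j => ∫ s in (0:ℝ)..t,
      ((mexp (s • A) * K) * (C * (mexp ((t - s) • B) * M))) i j) := by
    rw [hentry]
    show exp (t • B) * M = exp (t • A) * M - _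
    rw [hftc]; abel
  rw [hmain, hM]
  show exp (t • A) * (N1 - K * N2) - _ = exp (t • A) * N1 - _ - exp (t • A) * (K * N2)
  rw [Matrix.mul_sub]; abel

end Aux
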